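/- Suppose gcd(m/i, n/j) = t and ν has a generating sequence Q_0 = X, Q_1 = Y, Q_2, … in which every Q_l is an eigenfunction for H_{i,j,t,x}. Let ν̄ be the restriction of ν to the quotient field Q(A_{i,j,t,x}) of A_{i,j,t,x}, and let Γ_ν̄ be the value group of ν̄, i.e. the subgroup of ℚ generated by S^{(A_{i,j,t,x})_𝔫}(ν). If γ_1 = ν(Y) ∈ Γ_ν̄, then n = j and t = 1. -/

import Mathlib

open MvPolynomial Finset Pointwise

noncomputable section

namespace DuttaPaper

/-- The polynomial ring `K[X,Y]`, with `X = X 0` and `Y = X 1`. -/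
abbrev Poly (K : Type) [Field K] : Type := MvPolynomial (Fin 2) K

/-- The rational function field `K(X,Y)`. -/
abbrev RF (K : Type) [Field K] : Type := FractionRing (Poly K)

variable {K : Type} [Field K]

/-- The `K`-algebra endomorphism of `K[X,Y]` sending `X ↦ u • X`, `Y ↦ v • Y`;
this is the action of `(u,v) ∈ 𝕌_m × 𝕌_n` on `K[X,Y]`. -/
def act (u v : K) : Poly K →ₐ[K] Poly K :=
  MvPolynomial.aeval ![MvPolynomial.C u * MvPolynomial.X 0,
    MvPolynomial.C v * MvPolynomial.X 1]

/-- Membership in the set `H_{i,j,t,x} = {(α^{a i}, β^{b j}) : b ≡ a x (mod t)} ⊆ K × K`. -/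
def Hmem (α β : K) (i j t x : ℕ) (p : K × K) : Prop :=
  ∃ a b : ℤ, b ≡ a * (x : ℤ) [ZMOD (t : ℤ)] ∧
    p = (α ^ (a * (i : ℤ)), β ^ (b * (j : ℤ)))

/-- `f ∈ K[X,Y]` is an eigenfunction for `H_{i,j,t,x}`. -/
def IsEigen (α β : K) (i j t x : ℕ) (f : Poly K) : Prop :=
  ∀ p : K × K, Hmem α β i j t x p → ∃ lam : K, act p.1 p.2 f = lam • f

/-- `f ∈ K[X,Y]` belongs to the invariant ring `A_{i,j,t,x} = K[X,Y]^{H_{i,j,t,x}}`. -/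
def Invariant (α β : K) (i j t x : ℕ) (f : Poly K) : Prop :=
  ∀ p : K × K, Hmem α β i j t x p → act p.1 p.2 f = f

/-- A `ℚ`-valued (rational rank 1) valuation on a field `L`: the data of the values of the
nonzero elements (the value of `0` is irrelevant). -/
structure RatVal (L : Type) [Field L] where
  v : L → ℚ
  v_mul : ∀ a b : L, a ≠ 0 → b ≠ 0 → v (a * b) = v a + v b
  v_add : ∀ a b : L, a ≠ 0 → b ≠ 0 → a + b ≠ 0 → min (v a) (v b) ≤ v (a + b)

/-- Value of a polynomial under a valuation of `K(X,Y)`. -/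
def vP (ν : RatVal (RF K)) (f : Poly K) : ℚ :=
  ν.v (algebraMap (Poly K) (RF K) f)

/-- `ν` dominates `R_𝔪 = K[X,Y]_{(X,Y)}` : `ν ≥ 0` on `R_𝔪` and `ν > 0` on its maximal
ideal (expressed on the level of polynomials). -/
def DominatesRm (ν : RatVal (RF K)) : Prop :=
  (∀ f : Poly K, f ≠ 0 → 0 ≤ vP ν f) ∧
  (∀ f : Poly K, f ≠ 0 → MvPolynomial.constantCoeff f = 0 → 0 < vP ν f)

/-- `ν` is non-discrete: its value group is not a cyclic subgroup of `ℚ`. -/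
def Nondiscrete (ν : RatVal (RF K)) : Prop :=
  ¬ ∃ g : ℚ, ∀ z : RF K, z ≠ 0 → ∃ k : ℤ, ν.v z = (k : ℚ) * g

/-- Data of a candidate generating sequence: the polynomials `Q_l` and the numbers `m̄_l`. -/
structure GSData (K : Type) [Field K] where
  Q : ℕ → Poly K
  mbar : ℕ → ℕ

/-- `γ_l = ν(Q_l)`. -/
def GSData.γ (G : GSData K) (ν : RatVal (RF K)) (l : ℕ) : ℚ := vP ν (G.Q l)

/-- `d(l) = m̄_1 ⋯ m̄_{l-1}` (so `d(1) = 1`). -/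
def GSData.d (G : GSData K) (l : ℕ) : ℕ := ∏ k ∈ Finset.Icc 1 (l - 1), G.mbar k

/-- An exponent vector `e` is admissible when `e k < m̄_k` for all `k ≥ 1`. -/
def Adm (G : GSData K) (e : ℕ →₀ ℕ) : Prop := ∀ k, 1 ≤ k → e k < G.mbar k

/-- The monomial `X^{e 0} Q_1^{e 1} Q_2^{e 2} ⋯` in the generating sequence. -/
def Pmon (G : GSData K) (e : ℕ →₀ ℕ) : Poly K := e.prod fun k a => G.Q k ^ a

/-- The value `Σ_k e k • γ_k` of such a monomial. -/
def evalγ (ν : RatVal (RF K)) (G : GSData K) (e : ℕ →₀ ℕ) : ℚ :=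
  e.sum fun k a => (a : ℚ) * G.γ ν k

/-- `(Q_l)_{l≥0}` is a generating sequence for `ν` in `K[X,Y]` (properties (1)–(4) of
Section 2 of the paper, for the algorithm of Cutkosky–Vinh). -/
structure IsGenSeq (ν : RatVal (RF K)) (G : GSData K) : Prop where
  hQ0 : G.Q 0 = MvPolynomial.X 0
  hQ1 : G.Q 1 = MvPolynomial.X 1
  /-- `m̄_l ≥ 1`. -/
  hmbar_pos : ∀ l, 1 ≤ l → 0 < G.mbar l
  /-- `m̄_l γ_l ∈ G(γ_0, …, γ_{l-1})`. -/
  hmbar_mem : ∀ l, 1 ≤ l → ∃ c : ℕ → ℤ,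
      (G.mbar l : ℚ) * G.γ ν l = ∑ k ∈ Finset.range l, (c k : ℚ) * G.γ ν k
  /-- `m̄_l` is minimal with this property. -/
  hmbar_min : ∀ l, 1 ≤ l → ∀ q : ℕ, 0 < q →
      (∃ c : ℕ → ℤ, (q : ℚ) * G.γ ν l = ∑ k ∈ Finset.range l, (c k : ℚ) * G.γ ν k) →
      G.mbar l ≤ q
  /-- (1) `γ_{l+1} > m̄_l γ_l`. -/
  hgrowth : ∀ l, 1 ≤ l → (G.mbar l : ℚ) * G.γ ν l < G.γ ν (l + 1)
  /-- (2) `Q_l = Y^{d(l)} + (terms of lower Y-degree)`. -/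
  hmonic : ∀ l, 1 ≤ l →
      G.Q l - MvPolynomial.X 1 ^ G.d l = 0 ∨
      MvPolynomial.degreeOf 1 (G.Q l - MvPolynomial.X 1 ^ G.d l) < G.d l
  /-- (3), existence and uniqueness of the expansion of any nonzero `f` in terms of the
  admissible monomials `X^{e 0} Q_1^{e 1} ⋯ Q_r^{e r}`, `e k < m̄_k` for `k ≥ 1`. -/
  hexpand : ∀ f : Poly K, f ≠ 0 →
      ∃! c : (ℕ →₀ ℕ) →₀ K,
        (∀ e ∈ c.support, Adm G e) ∧
        f = c.sum fun e a => MvPolynomial.C a * Pmon G e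
  /-- (3), the nonzero terms of the expansion have pairwise distinct values and
  `ν(f)` is the minimum of those values. -/
  hval : ∀ f : Poly K, f ≠ 0 → ∀ c : (ℕ →₀ ℕ) →₀ K,
      (∀ e ∈ c.support, Adm G e) →
      f = (c.sum fun e a => MvPolynomial.C a * Pmon G e) →
      (∀ e ∈ c.support, ∀ e' ∈ c.support, evalγ ν G e = evalγ ν G e' → e = e') ∧
      ∃ e₀ ∈ c.support, vP ν f = evalγ ν G e₀ ∧
        ∀ e ∈ c.support, evalγ ν G e₀ ≤ evalγ ν G e
  /-- (4) `Q_{l+1} = Q_l^{m̄_l} - λ_l X^{c_0} Y^{c_1} Q_2^{c_2} ⋯ Q_{l-1}^{c_{l-1}}` with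
  `0 ≤ c_k < m̄_k` for `k ≥ 1` and `m̄_l γ_l = Σ_{k<l} c_k γ_k`. -/
  hrec : ∀ l, 1 ≤ l → ∃ lam : K, lam ≠ 0 ∧ ∃ cc : ℕ → ℕ,
      (∀ k, 1 ≤ k → k < l → cc k < G.mbar k) ∧
      G.Q (l + 1) =
        G.Q l ^ G.mbar l - MvPolynomial.C lam * ∏ k ∈ Finset.range l, G.Q k ^ cc k ∧
      (G.mbar l : ℚ) * G.γ ν l = ∑ k ∈ Finset.range l, (cc k : ℚ) * G.γ ν k

/-- The valuation semigroup `S^{R_𝔪}(ν) = {ν(h) : 0 ≠ h ∈ R_𝔪}`. -/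
def SRm (ν : RatVal (RF K)) : Set ℚ :=
  {q | ∃ f g : Poly K, f ≠ 0 ∧ MvPolynomial.constantCoeff g ≠ 0 ∧
    q = vP ν f - vP ν g}

/-- The valuation semigroup `S^{(A_{i,j,t,x})_𝔫}(ν)` of the invariant ring localized at
`𝔫 = (X,Y) ∩ A_{i,j,t,x}`. -/
def SA (ν : RatVal (RF K)) (α β : K) (i j t x : ℕ) : Set ℚ :=
  {q | ∃ f g : Poly K, f ≠ 0 ∧ Invariant α β i j t x f ∧ Invariant α β i j t x g ∧
    MvPolynomial.constantCoeff g ≠ 0 ∧ q = vP ν f - vP ν g}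

/-- `S` is a finitely generated module over the subsemigroup `T`:
`S = {s_1, …, s_k} + T` for finitely many `s_i ∈ S`. -/
def FGover (S T : Set ℚ) : Prop :=
  ∃ F : Finset ℚ, (F : Set ℚ) ⊆ S ∧ S = (F : Set ℚ) + T


/-! Every `Q_l` is an eigenfunction for `H = H_{i,j,t,x}`, and since `Q_0 = X` and `Q_l` has
leading monomial `Y ^ d(l)`, its eigencharacter is that of `X` or of `Y ^ d(l)`. The value of an
invariant `f` is the value of one monomial `X^{e_0} Q_1^{e_1} ⋯` of its expansion, and comparing
the expansions of `f` and `h • f` shows that this monomial has trivial character on `H`. Every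
integer relation `Σ n_k γ_k = 0` is a combination of the relations `m̄_l γ_l = Σ c_k γ_k` of (4),
which have trivial character because they come from the identity
`Q_{l+1} = Q_l^{m̄_l} - λ_l X^{c_0} ⋯ Q_{l-1}^{c_{l-1}}` between eigenfunctions. Hence if `γ_1`
lies in the value group of `ν̄`, the character of `Y` is trivial on `H`: `β^{bj} = 1` whenever
`b ≡ ax (mod t)`. Taking `(a, b) = (0, t)` and `(1, x)` gives `n ∣ tj` and `n ∣ xj`, so `t ∣ x`,
`t = 1` and `n = j`. -/

lemma act_monomial (u v : K) (s : Fin 2 →₀ ℕ) (c : K) :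
    act u v (monomial s c) = monomial s (u ^ s 0 * v ^ s 1 * c) := by
  rw [act, aeval_monomial, monomial_eq,
    Finsupp.prod_fintype _ _ (fun i => pow_zero _),
    Finsupp.prod_fintype _ _ (fun i => pow_zero _), Fin.prod_univ_two, Fin.prod_univ_two]
  simp only [Matrix.cons_val_zero, Matrix.cons_val_one, mul_pow, ← C_pow, algebraMap_eq, map_mul]
  ring

lemma coeff_act (u v : K) (f : Poly K) (s : Fin 2 →₀ ℕ) :
    coeff s (act u v f) = u ^ s 0 * v ^ s 1 * coeff s f := by
  conv_lhs => rw [f.as_sum]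
  simp only [map_sum, coeff_sum, act_monomial, coeff_monomial]
  rw [Finset.sum_ite_eq' f.support s (fun s' => u ^ s' 0 * v ^ s' 1 * coeff s' f)]
  split_ifs with h
  · rfl
  · simp [MvPolynomial.notMem_support_iff.mp h]

lemma act_C (u v a : K) : act u v (C a) = C a :=
  (act u v).commutes a

lemma eq_pow_of_act_eq_smul {u v lam : K} {f : Poly K} {d : ℕ}
    (hf : coeff (Finsupp.single 1 d) f = 1) (hact : act u v f = lam • f) : lam = v ^ d := by
  simpa [coeff_act, hf] using (congrArg (coeff (Finsupp.single 1 d)) hact).symm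

/-- The eigenvalue of `X ^ w.1 * Y ^ w.2` under `act p.1 p.2`. -/
def weightChar (p : K × K) (w : ℤ × ℤ) : K := p.1 ^ w.1 * p.2 ^ w.2

section weightChar

variable {p : K × K}

lemma weightChar_add (h₁ : p.1 ≠ 0) (h₂ : p.2 ≠ 0) (w w' : ℤ × ℤ) :
    weightChar p (w + w') = weightChar p w * weightChar p w' := by
  simp only [weightChar, Prod.fst_add, Prod.snd_add, zpow_add₀ h₁, zpow_add₀ h₂]
  ring

lemma weightChar_neg (w : ℤ × ℤ) : weightChar p (-w) = (weightChar p w)⁻¹ := by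
  simp [weightChar, zpow_neg, mul_comm]

lemma weightChar_nsmul (c : ℕ) (w : ℤ × ℤ) : weightChar p (c • w) = weightChar p w ^ c := by
  simp [weightChar, mul_pow, zpow_mul, mul_comm (c : ℤ)]

lemma weightChar_sum (h₁ : p.1 ≠ 0) (h₂ : p.2 ≠ 0) {ι : Type*} (s : Finset ι)
    (w : ι → ℤ × ℤ) : weightChar p (∑ k ∈ s, w k) = ∏ k ∈ s, weightChar p (w k) := by
  classical
  induction s using Finset.induction_on with
  | empty => simp [weightChar]
  | insert a s ha ih => rw [sum_insert ha, prod_insert ha, weightChar_add h₁ h₂, ih]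

end weightChar

/-- Points of `P` off the torus `(Kˣ)²` are ignored, which makes this a subgroup. -/
def trivialWeights (P : K × K → Prop) : AddSubgroup (ℤ × ℤ) where
  carrier := {w | ∀ p : K × K, P p → p.1 ≠ 0 → p.2 ≠ 0 → weightChar p w = 1}
  zero_mem' := by simp [weightChar]
  add_mem' := fun hw hw' p hp h₁ h₂ => by
    rw [weightChar_add h₁ h₂, hw p hp h₁ h₂, hw' p hp h₁ h₂, one_mul]
  neg_mem' := fun hw p hp h₁ h₂ => by rw [weightChar_neg, hw p hp h₁ h₂, inv_one]

lemma sub_mem_trivialWeights {P : K × K → Prop} {w w' : ℤ × ℤ}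
    (h : ∀ p : K × K, P p → p.1 ≠ 0 → p.2 ≠ 0 → weightChar p w = weightChar p w') :
    w - w' ∈ trivialWeights P := fun p hp h₁ h₂ => by
  rw [sub_eq_add_neg, weightChar_add h₁ h₂, weightChar_neg, h p hp h₁ h₂]
  exact mul_inv_cancel₀ (mul_ne_zero (zpow_ne_zero _ h₁) (zpow_ne_zero _ h₂))

namespace GSData

variable (G : GSData K)

def IsEigenOn (P : K × K → Prop) : Prop :=
  ∀ l p, P p → ∃ lam : K, act p.1 p.2 (G.Q l) = lam • G.Q l

/-- The weight of the leading monomial `X` of `Q_0`, resp. `Y ^ d(k)` of `Q_k`; it determines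
the eigencharacter of an eigenfunction `Q_k`. -/
def eigenWeight (k : ℕ) : ℤ × ℤ := if k = 0 then (1, 0) else (0, G.d k)

def weightMap : (ℕ →₀ ℤ) →ₗ[ℤ] ℤ × ℤ := Finsupp.linearCombination ℤ G.eigenWeight

def valueMap (ν : RatVal (RF K)) : (ℕ →₀ ℤ) →ₗ[ℤ] ℚ := Finsupp.linearCombination ℤ (G.γ ν)

/-- `{Σ nₖ γₖ : Σ nₖ • eigenWeight k ∈ trivialWeights P}`. -/
def trivialWeightValues (ν : RatVal (RF K)) (P : K × K → Prop) : AddSubgroup ℚ :=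
  ((trivialWeights P).comap G.weightMap.toAddMonoidHom).map (G.valueMap ν).toAddMonoidHom

lemma d_one : G.d 1 = 1 := by
  simp [GSData.d]

lemma d_succ {l : ℕ} (hl : 1 ≤ l) : G.d (l + 1) = G.d l * G.mbar l := by
  obtain ⟨l, rfl⟩ := Nat.exists_eq_add_of_le' hl
  exact prod_Icc_succ_top (by omega) _

lemma eigenWeight_one : G.eigenWeight 1 = (0, 1) := by
  simp [eigenWeight, d_one]

lemma eigenWeight_succ {l : ℕ} (hl : 1 ≤ l) :
    G.eigenWeight (l + 1) = G.mbar l • G.eigenWeight l := by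
  simp [eigenWeight, G.d_succ hl, Nat.one_le_iff_ne_zero.mp hl, mul_comm]

lemma weightMap_natCast (e : ℕ →₀ ℕ) :
    G.weightMap (e.mapRange Nat.cast Nat.cast_zero) = ∑ k ∈ e.support, e k • G.eigenWeight k := by
  rw [weightMap, Finsupp.linearCombination_apply, Finsupp.sum_mapRange_index (by simp)]
  exact sum_congr rfl fun k _ => natCast_zsmul _ _

lemma valueMap_natCast (ν : RatVal (RF K)) (e : ℕ →₀ ℕ) :
    G.valueMap ν (e.mapRange Nat.cast Nat.cast_zero) = evalγ ν G e := by
  rw [valueMap, Finsupp.linearCombination_apply, Finsupp.sum_mapRange_index (by simp), evalγ]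
  exact Finsupp.sum_congr fun k _ => by rw [zsmul_eq_mul, Int.cast_natCast]

end GSData

namespace IsGenSeq

variable {ν : RatVal (RF K)} {G : GSData K} {P : K × K → Prop} {p : K × K}

lemma d_pos (hG : IsGenSeq ν G) (l : ℕ) : 0 < G.d l :=
  prod_pos fun k hk => hG.hmbar_pos k (mem_Icc.mp hk).1

lemma coeff_Q (hG : IsGenSeq ν G) {l : ℕ} (hl : 1 ≤ l) :
    coeff (Finsupp.single 1 (G.d l)) (G.Q l) = 1 := by
  have hY : coeff (Finsupp.single 1 (G.d l)) (X 1 ^ G.d l : Poly K) = 1 := by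
    simp [coeff_X_pow]
  rcases hG.hmonic l hl with h | h
  · rwa [sub_eq_zero.mp h]
  · have hlow : coeff (Finsupp.single 1 (G.d l)) (G.Q l - X 1 ^ G.d l) = 0 := by
      by_contra hne
      have := (degreeOf_lt_iff (hG.d_pos l)).mp h _ (mem_support_iff.mpr hne)
      simp at this
    rwa [coeff_sub, hY, sub_eq_zero] at hlow

lemma Q_ne_zero (hG : IsGenSeq ν G) (l : ℕ) : G.Q l ≠ 0 := by
  rcases Nat.eq_zero_or_pos l with rfl | hl
  · rw [hG.hQ0]
    exact X_ne_zero _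
  · intro h
    simpa [h] using hG.coeff_Q hl

lemma act_Q (hG : IsGenSeq ν G) (hp : ∀ l, ∃ lam : K, act p.1 p.2 (G.Q l) = lam • G.Q l)
    (k : ℕ) : act p.1 p.2 (G.Q k) = weightChar p (G.eigenWeight k) • G.Q k := by
  rcases Nat.eq_zero_or_pos k with rfl | hk
  · simp [GSData.eigenWeight, weightChar, hG.hQ0, act, smul_eq_C_mul]
  · obtain ⟨lam, hlam⟩ := hp k
    rw [hlam, eq_pow_of_act_eq_smul (hG.coeff_Q hk) hlam]
    simp [GSData.eigenWeight, weightChar, hk.ne']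

lemma act_prod_Q (hG : IsGenSeq ν G) (hp : ∀ l, ∃ lam : K, act p.1 p.2 (G.Q l) = lam • G.Q l)
    (h₁ : p.1 ≠ 0) (h₂ : p.2 ≠ 0) (s : Finset ℕ) (c : ℕ → ℕ) :
    act p.1 p.2 (∏ k ∈ s, G.Q k ^ c k) =
      weightChar p (∑ k ∈ s, c k • G.eigenWeight k) • ∏ k ∈ s, G.Q k ^ c k := by
  simp only [map_prod, map_pow, hG.act_Q hp, smul_pow, prod_smul, weightChar_sum h₁ h₂,
    weightChar_nsmul]

lemma act_Pmon (hG : IsGenSeq ν G) (hp : ∀ l, ∃ lam : K, act p.1 p.2 (G.Q l) = lam • G.Q l)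
    (h₁ : p.1 ≠ 0) (h₂ : p.2 ≠ 0) (e : ℕ →₀ ℕ) :
    act p.1 p.2 (Pmon G e) =
      weightChar p (G.weightMap (e.mapRange Nat.cast Nat.cast_zero)) • Pmon G e := by
  rw [G.weightMap_natCast]
  exact hG.act_prod_Q hp h₁ h₂ e.support e

/-- The expansion of `T f` is that of `f` with coefficients rescaled by `χ`; uniqueness of the
expansion does the rest. -/
lemma eq_one_of_apply_eq_self (hG : IsGenSeq ν G) (T : Poly K →ₗ[K] Poly K)
    (χ : (ℕ →₀ ℕ) → K) (hT : ∀ e, T (Pmon G e) = χ e • Pmon G e) {f : Poly K} (hf : f ≠ 0)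
    (hTf : T f = f) {c : (ℕ →₀ ℕ) →₀ K} (hadm : ∀ e ∈ c.support, Adm G e)
    (hc : f = c.sum fun e a => C a * Pmon G e) {e : ℕ →₀ ℕ} (he : e ∈ c.support) :
    χ e = 1 := by
  classical
  obtain ⟨c₀, -, huniq⟩ := hG.hexpand f hf
  set c' := Finsupp.onFinset c.support (fun e => χ e * c e)
    fun e h => Finsupp.mem_support_iff.mpr (right_ne_zero_of_mul h)
  have hc' : f = c'.sum fun e a => C a * Pmon G e := by
    rw [Finsupp.onFinset_sum _ (fun e => by simp)]
    conv_lhs => rw [← hTf, hc]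
    rw [Finsupp.sum, map_sum]
    refine sum_congr rfl fun e _ => ?_
    rw [← smul_eq_C_mul, map_smul, hT, smul_smul, mul_comm (c e), smul_eq_C_mul]
  have hc'c : c' = c :=
    (huniq c' ⟨fun e h => hadm e (Finsupp.support_onFinset_subset h), hc'⟩).trans
      (huniq c ⟨hadm, hc⟩).symm
  have hce : χ e * c e = c e := by
    simpa [c'] using congrArg (· e) hc'c
  exact mul_right_cancel₀ (Finsupp.mem_support_iff.mp he) (hce.trans (one_mul _).symm)

lemma vP_mem_trivialWeightValues (hG : IsGenSeq ν G) (heig : G.IsEigenOn P) {f : Poly K}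
    (hf : f ≠ 0) (hinv : ∀ p, P p → act p.1 p.2 f = f) :
    vP ν f ∈ G.trivialWeightValues ν P := by
  obtain ⟨c, ⟨hadm, hc⟩, -⟩ := hG.hexpand f hf
  obtain ⟨-, e, he, hv, -⟩ := hG.hval f hf c hadm hc
  refine ⟨e.mapRange Nat.cast Nat.cast_zero, fun p hp h₁ h₂ => ?_, ?_⟩
  · exact hG.eq_one_of_apply_eq_self (act p.1 p.2).toLinearMap _
      (hG.act_Pmon (fun l => heig l p hp) h₁ h₂) hf (hinv p hp) hadm hc he
  · simp [G.valueMap_natCast, hv]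

lemma exists_relation_mem_trivialWeights (hG : IsGenSeq ν G) (heig : G.IsEigenOn P) {l : ℕ}
    (hl : 1 ≤ l) :
    ∃ c : ℕ → ℕ, (G.mbar l : ℚ) * G.γ ν l = ∑ k ∈ range l, (c k : ℚ) * G.γ ν k ∧
      G.mbar l • G.eigenWeight l - ∑ k ∈ range l, c k • G.eigenWeight k ∈ trivialWeights P := by
  obtain ⟨lam, hlam, c, -, hQ, hval⟩ := hG.hrec l hl
  refine ⟨c, hval, sub_mem_trivialWeights fun p hp h₁ h₂ => ?_⟩
  have hp' := fun l => heig l p hp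
  set B := ∏ k ∈ range l, G.Q k ^ c k
  have hB : C lam * B ≠ 0 := mul_ne_zero (C_ne_zero.mpr hlam)
    (prod_ne_zero_iff.mpr fun k _ => pow_ne_zero _ (hG.Q_ne_zero k))
  have hact := congrArg (act p.1 p.2) hQ
  rw [hG.act_Q hp', G.eigenWeight_succ hl, weightChar_nsmul, hQ, map_sub, map_mul, act_C,
    map_pow, hG.act_Q hp', hG.act_prod_Q hp' h₁ h₂, smul_pow, smul_sub, mul_smul_comm,
    sub_right_inj] at hact
  rw [weightChar_nsmul]
  exact smul_left_injective K hB hact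

lemma mbar_dvd (hG : IsGenSeq ν G) {l : ℕ} (hl : 1 ≤ l) {z : ℤ} {c : ℕ → ℤ}
    (hz : (z : ℚ) * G.γ ν l = ∑ k ∈ range l, (c k : ℚ) * G.γ ν k) : (G.mbar l : ℤ) ∣ z := by
  have hm : (0 : ℤ) < G.mbar l := by exact_mod_cast hG.hmbar_pos l hl
  obtain ⟨c', hc'⟩ := hG.hmbar_mem l hl
  set r := z % G.mbar l
  have hr : (r.toNat : ℚ) * G.γ ν l =
      ∑ k ∈ range l, ((c k - z / G.mbar l * c' k : ℤ) : ℚ) * G.γ ν k := by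
    have hr : ((r.toNat : ℤ) : ℚ) = z - ((z / G.mbar l : ℤ) : ℚ) * G.mbar l := by
      rw [Int.toNat_of_nonneg (Int.emod_nonneg z hm.ne'), Int.emod_def]
      push_cast
      ring
    rw [← Int.cast_natCast, hr, sub_mul, hz, mul_assoc, hc', mul_sum, ← sum_sub_distrib]
    exact sum_congr rfl fun k _ => by push_cast; ring
  by_contra hndvd
  have hpos : 0 < r.toNat := by
    have := Int.emod_nonneg z hm.ne'
    have : r ≠ 0 := fun h => hndvd (Int.dvd_of_emod_eq_zero h)
    omega
  have := hG.hmbar_min l hl r.toNat hpos ⟨_, hr⟩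
  have := Int.emod_lt_of_pos z hm
  omega

/-- Induction on `l`: `m̄_{l-1}` divides the last coefficient of a relation, and subtracting the
matching multiple of the relation (4) for `Q_l` leaves a relation among `γ_0, …, γ_{l-2}`. -/
lemma sum_smul_eigenWeight_mem_trivialWeights (hG : IsGenSeq ν G) (heig : G.IsEigenOn P)
    (hγ₀ : G.γ ν 0 ≠ 0) (l : ℕ) (c : ℕ → ℤ) (hc : ∑ k ∈ range l, (c k : ℚ) * G.γ ν k = 0) :
    ∑ k ∈ range l, c k • G.eigenWeight k ∈ trivialWeights P := by
  induction l generalizing c with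
  | zero => simp
  | succ l ih =>
    rcases Nat.eq_zero_or_pos l with rfl | hl
    · have : c 0 = 0 := by simpa [hγ₀] using hc
      simp [this]
    rw [sum_range_succ] at hc ⊢
    obtain ⟨s, hs⟩ : (G.mbar l : ℤ) ∣ c l :=
      hG.mbar_dvd hl (c := fun k => -c k) (by
        simp only [Int.cast_neg, neg_mul, sum_neg_distrib]
        linarith)
    obtain ⟨d, hdγ, hdw⟩ := hG.exists_relation_mem_trivialWeights heig hl
    have hrest := ih (fun k => c k + s * d k) (by
      simp only [Int.cast_add, Int.cast_mul, Int.cast_natCast, add_mul, sum_add_distrib,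
        mul_assoc, ← mul_sum, ← hdγ]
      rw [hs] at hc
      push_cast at hc
      linear_combination hc)
    have hsplit : ∑ k ∈ range l, c k • G.eigenWeight k + c l • G.eigenWeight l =
        ∑ k ∈ range l, (c k + s * d k) • G.eigenWeight k +
          s • (G.mbar l • G.eigenWeight l - ∑ k ∈ range l, d k • G.eigenWeight k) := by
      simp only [hs, add_smul, sum_add_distrib, mul_smul, smul_sub, smul_sum, natCast_zsmul]
      rw [smul_comm (G.mbar l) s]
      abel
    rw [hsplit]
    exact add_mem hrest (zsmul_mem hdw s)

lemma weightMap_mem_trivialWeights (hG : IsGenSeq ν G) (heig : G.IsEigenOn P)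
    (hγ₀ : G.γ ν 0 ≠ 0) {n : ℕ →₀ ℤ} (hn : G.valueMap ν n = 0) :
    G.weightMap n ∈ trivialWeights P := by
  obtain ⟨l, hl⟩ := n.support.exists_nat_subset_range
  have hsum {M : Type} [AddCommGroup M] (v : ℕ → M) :
      Finsupp.linearCombination ℤ v n = ∑ k ∈ range l, n k • v k := by
    rw [Finsupp.linearCombination_apply, Finsupp.sum_of_support_subset n hl _ (by simp)]
  rw [GSData.valueMap, hsum] at hn
  rw [GSData.weightMap, hsum]
  exact hG.sum_smul_eigenWeight_mem_trivialWeights heig hγ₀ l n (by simpa [zsmul_eq_mul] using hn)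

lemma eigenWeight_one_mem_trivialWeights (hG : IsGenSeq ν G) (heig : G.IsEigenOn P)
    (hγ₀ : G.γ ν 0 ≠ 0) (h : G.γ ν 1 ∈ G.trivialWeightValues ν P) :
    ((0, 1) : ℤ × ℤ) ∈ trivialWeights P := by
  obtain ⟨n, hn, hv⟩ := AddSubgroup.mem_map.mp h
  have hrel := hG.weightMap_mem_trivialWeights heig hγ₀ (n := n - Finsupp.single 1 1)
    (by simpa [GSData.valueMap, sub_eq_zero] using hv)
  simpa [GSData.weightMap, G.eigenWeight_one] using sub_mem hn hrel

end IsGenSeq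

lemma pow_eq_one_of_mem_trivialWeights_Hmem {α β : K} {i j t x : ℕ} (hα : α ≠ 0) (hβ : β ≠ 0)
    (h : ((0, 1) : ℤ × ℤ) ∈ trivialWeights (Hmem α β i j t x)) (a b : ℤ)
    (hab : b ≡ a * x [ZMOD t]) : β ^ (b * j) = 1 := by
  simpa [weightChar] using h _ ⟨a, b, hab, rfl⟩ (zpow_ne_zero _ hα) (zpow_ne_zero _ hβ)

lemma eq_and_eq_one_of_dvd_mul {n j t x : ℕ} (hn : n ≠ 0) (hjn : j ∣ n) (htj : t ∣ n / j)
    (hxt : Nat.gcd x t = 1) (hnt : n ∣ t * j) (hnx : n ∣ x * j) : n = j ∧ t = 1 := by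
  have hj : j ≠ 0 := by rintro rfl; exact hn (Nat.eq_zero_of_zero_dvd hjn)
  have htx : t ∣ x :=
    (Nat.mul_dvd_mul_iff_right (Nat.pos_of_ne_zero hj)).mp
      ((mul_comm j t ▸ Nat.mul_dvd_of_dvd_div hjn htj).trans hnx)
  have ht : t = 1 := Nat.Coprime.eq_one_of_dvd (Nat.coprime_comm.mp hxt) htx
  subst ht
  exact ⟨Nat.dvd_antisymm (by simpa using hnt) hjn, rfl⟩

theorem stmt_19_general (K : Type) [Field K]
    (m n : ℕ) (hm : 0 < m) (hn : 0 < n) (α β : K)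
    (hα : IsPrimitiveRoot α m) (hβ : IsPrimitiveRoot β n)
    (i j t x : ℕ)
    (hjn : j ∣ n) (htj : t ∣ n / j)
    (hxt : Nat.gcd x t = 1)
    (ν : RatVal (RF K)) (hdom : DominatesRm ν)
    (G : GSData K) (hG : IsGenSeq ν G)
    (heig : ∀ l, IsEigen α β i j t x (G.Q l))
    (hmem : G.γ ν 1 ∈ AddSubgroup.closure (SA ν α β i j t x)) :
    n = j ∧ t = 1 := by
  have hγ₀ : G.γ ν 0 ≠ 0 := by
    rw [GSData.γ, hG.hQ0]
    exact (hdom.2 _ (X_ne_zero 0) (constantCoeff_X K 0)).ne'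
  have hSA : AddSubgroup.closure (SA ν α β i j t x) ≤ G.trivialWeightValues ν (Hmem α β i j t x) :=
    (AddSubgroup.closure_le _).mpr fun _ ⟨f, g, hf, hfi, hgi, hg, hq⟩ =>
      hq ▸ sub_mem (hG.vP_mem_trivialWeightValues heig hf hfi)
        (hG.vP_mem_trivialWeightValues heig (fun h => hg (h ▸ map_zero _)) hgi)
  have hβpow := pow_eq_one_of_mem_trivialWeights_Hmem (hα.ne_zero hm.ne') (hβ.ne_zero hn.ne')
    (hG.eigenWeight_one_mem_trivialWeights heig hγ₀ (hSA hmem))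
  refine eq_and_eq_one_of_dvd_mul hn.ne' hjn htj hxt ?_ ?_
  · exact_mod_cast (hβ.zpow_eq_one_iff_dvd _).mp (hβpow 0 t (by simp [Int.ModEq]))
  · exact_mod_cast (hβ.zpow_eq_one_iff_dvd _).mp (hβpow 1 x (by simp [Int.ModEq]))

/-- if `γ_1 = ν(Y)` lies in the value group of `ν̄` (the subgroup of `ℚ`
generated by the invariant valuation semigroup), then `n = j` and `t = 1`. -/
theorem stmt_19 (K : Type) [Field K] [IsAlgClosed K] [CharZero K]
    (m n : ℕ) (hm : 0 < m) (hn : 0 < n) (α β : K)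
    (hα : IsPrimitiveRoot α m) (hβ : IsPrimitiveRoot β n)
    (i j t x : ℕ) (hi : 0 < i) (hj : 0 < j) (ht : 0 < t)
    (him : i ∣ m) (hjn : j ∣ n) (hti : t ∣ m / i) (htj : t ∣ n / j)
    (hxt : Nat.gcd x t = 1) (hx1 : 1 ≤ x) (hxle : x ≤ t)
    (ν : RatVal (RF K)) (hdom : DominatesRm ν) (hnd : Nondiscrete ν)
    (G : GSData K) (hG : IsGenSeq ν G)
    (heig : ∀ l, IsEigen α β i j t x (G.Q l))
    (hgcd : Nat.gcd (m / i) (n / j) = t)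
    (hmem : G.γ ν 1 ∈ AddSubgroup.closure (SA ν α β i j t x)) :
    n = j ∧ t = 1 :=
  stmt_19_general K m n hm hn α β hα hβ i j t x hjn htj hxt ν hdom G hG heig hmem

end DuttaPaper
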